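/- arXiv:2302.08176 — 2 statements merged into one kernel-verified Lean document; each statement's English description precedes it below -/
import Mathlib

section
/- For any K ⊆ 𝒫(T): (i) K is consistent if and only if E(K) = {D ∈ 𝔻 : K ⊆ sds(D)} is nonempty; (ii) cl_K(K) = ⋂_{D ∈ 𝔻 with K ⊆ sds(D)} sds(D); (iii) K is a coherent SDS if and only if K is consistent and K = ⋂_{D ∈ 𝔻 with K ⊆ sds(D)} sds(D). -/
/-!
Every coherent SDT `D` yields the coherent SDS `sds D`, and coherent SDSs are closed under
nonempty intersections. Conversely, a coherent SDS `K` is separated from any `A ∉ K` by a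
coherent SDT: otherwise every selection map `σ` of `K` has a thing of `cl (σ K)` in `Tneg ∪ A`,
and by K5, K3 and K2 these things would put `A` into `K`. The SDT is `cl (σ K)` for a
selection map `σ` avoiding `Tneg ∪ A`, or `cl ∅` when `K` is empty.
-/

universe u

variable {T : Type u}

/-- `cl` is a closure operator on subsets of `T`. -/
def IsClosure (cl : Set T → Set T) : Prop :=
  (∀ A : Set T, A ⊆ cl A) ∧
  (∀ A B : Set T, A ⊆ B → cl A ⊆ cl B) ∧
  (∀ A : Set T, cl (cl A) = cl A)

/-- `cl` is finitary: the closure of a set is the union of the closures of its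
finite subsets. -/
def IsFinitary (cl : Set T → Set T) : Prop :=
  ∀ A : Set T, cl A = ⋃ F ∈ {F : Set T | F.Finite ∧ F ⊆ A}, cl F

/-- A coherent set of desirable things (SDT): closed and avoiding the forbidden
things `Tneg`. -/
def CohSDT (cl : Set T → Set T) (Tneg : Set T) (D : Set T) : Prop :=
  cl D = D ∧ D ∩ Tneg = ∅

/-- Selection maps of a collection `W` of sets of things: maps choosing an
element of each member of `W`. -/
def Sel (W : Set (Set T)) : Type u :=
  {σ : Set T → T // ∀ A ∈ W, σ A ∈ A}

/-- A coherent set of desirable sets of things (SDS): axioms K1–K5. -/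
def CohSDS (cl : Set T → Set T) (Tneg : Set T) (K : Set (Set T)) : Prop :=
  (∅ : Set T) ∉ K ∧
  (∀ A₁ ∈ K, ∀ A₂ : Set T, A₁ ⊆ A₂ → A₂ ∈ K) ∧
  (∀ A ∈ K, A \ Tneg ∈ K) ∧
  (∀ t ∈ cl (∅ : Set T), ({t} : Set T) ∈ K) ∧
  (∀ W ⊆ K, W.Nonempty →
    ∀ f : Sel W → T, (∀ σ : Sel W, f σ ∈ cl (σ.1 '' W)) → Set.range f ∈ K)

/-- A finitely coherent SDS: axioms K1–K4 together with K5 restricted to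
nonempty finite subcollections. -/
def FinCohSDS (cl : Set T → Set T) (Tneg : Set T) (K : Set (Set T)) : Prop :=
  (∅ : Set T) ∉ K ∧
  (∀ A₁ ∈ K, ∀ A₂ : Set T, A₁ ⊆ A₂ → A₂ ∈ K) ∧
  (∀ A ∈ K, A \ Tneg ∈ K) ∧
  (∀ t ∈ cl (∅ : Set T), ({t} : Set T) ∈ K) ∧
  (∀ W ⊆ K, W.Finite → W.Nonempty →
    ∀ f : Sel W → T, (∀ σ : Sel W, f σ ∈ cl (σ.1 '' W)) → Set.range f ∈ K)

/-- A finitely coherent set of desirable finite sets of things (SDFS):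
axioms F1–F5. -/
def FinCohSDFS (cl : Set T → Set T) (Tneg : Set T) (K : Set (Set T)) : Prop :=
  (∀ F ∈ K, F.Finite) ∧
  (∅ : Set T) ∉ K ∧
  (∀ F₁ ∈ K, ∀ F₂ : Set T, F₂.Finite → F₁ ⊆ F₂ → F₂ ∈ K) ∧
  (∀ F ∈ K, F \ Tneg ∈ K) ∧
  (∀ t ∈ cl (∅ : Set T), ({t} : Set T) ∈ K) ∧
  (∀ W ⊆ K, W.Finite → W.Nonempty →
    ∀ f : Sel W → T, (∀ σ : Sel W, f σ ∈ cl (σ.1 '' W)) → Set.range f ∈ K)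

/-- The set of things whose singletons belong to `K`. -/
def sdt (K : Set (Set T)) : Set T := {t | ({t} : Set T) ∈ K}

/-- The SDS of all sets of things meeting `D`. -/
def sds (D : Set T) : Set (Set T) := {A | (A ∩ D).Nonempty}

/-- The SDFS of all finite sets of things meeting `D`. -/
def sdfs (D : Set T) : Set (Set T) := {F | F.Finite ∧ (F ∩ D).Nonempty}

/-- The event `𝒟_A` of all coherent SDTs meeting `A`. -/
def evA (cl : Set T → Set T) (Tneg : Set T) (A : Set T) : Set (Set T) :=
  {D | CohSDT cl Tneg D ∧ (A ∩ D).Nonempty}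

/-- The event `E(W)` of all coherent SDTs meeting every member of `W`
(with `E(∅)` equal to the set of all coherent SDTs). -/
def ev (cl : Set T → Set T) (Tneg : Set T) (W : Set (Set T)) : Set (Set T) :=
  {D | CohSDT cl Tneg D ∧ ∀ A ∈ W, (A ∩ D).Nonempty}

/-- An SDS is conjunctive if every desirable set contains a desirable
singleton. -/
def Conjunctive (K : Set (Set T)) : Prop :=
  ∀ A ∈ K, ∃ t ∈ A, ({t} : Set T) ∈ K

/-- Completeness of an SDS. -/
def CompleteSDS (K : Set (Set T)) : Prop :=
  ∀ A₁ A₂ : Set T, A₁ ∪ A₂ ∈ K → A₁ ∈ K ∨ A₂ ∈ K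

/-- The finitary part `K^f` of an SDS. -/
def finPart (K : Set (Set T)) : Set (Set T) :=
  {A | ∃ B ∈ K, B.Finite ∧ B ⊆ A}

/-- An SDS is finitary if every desirable set has a finite desirable subset. -/
def FinitarySDS (K : Set (Set T)) : Prop :=
  ∀ A ∈ K, ∃ B, B.Finite ∧ B ⊆ A ∧ B ∈ K

/-- The lattice of events `E`. -/
def Ecal (cl : Set T → Set T) (Tneg : Set T) : Set (Set (Set T)) :=
  {E | ∃ W : Set (Set T), E = ev cl Tneg W}

/-- The lattice of finitary events `E_fin`. -/
def Efin (cl : Set T → Set T) (Tneg : Set T) : Set (Set (Set T)) :=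
  {E | ∃ W : Set (Set T), W.Finite ∧ E = ev cl Tneg W}

/-- A filter on a lattice of events `L` ordered by inclusion. -/
def IsFilterOn (L F : Set (Set (Set T))) : Prop :=
  F ⊆ L ∧ F.Nonempty ∧
  (∀ E₁ ∈ F, ∀ E₂ ∈ L, E₁ ⊆ E₂ → E₂ ∈ F) ∧
  (∀ E₁ ∈ F, ∀ E₂ ∈ F, E₁ ∩ E₂ ∈ F)

/-- A proper filter on `L`. -/
def IsProperFilterOn (L F : Set (Set (Set T))) : Prop :=
  IsFilterOn L F ∧ F ≠ L

/-- A prime filter on `L`. -/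
def IsPrimeFilterOn (L F : Set (Set (Set T))) : Prop :=
  IsProperFilterOn L F ∧
  ∀ E₁ ∈ L, ∀ E₂ ∈ L, E₁ ∪ E₂ ∈ F → E₁ ∈ F ∨ E₂ ∈ F

/-- A proper principal filter on `L`: the upset of some nonempty `E₀ ∈ L`. -/
def IsProperPrincipalFilterOn (L F : Set (Set (Set T))) : Prop :=
  ∃ E₀ ∈ L, E₀ ≠ (∅ : Set (Set T)) ∧ F = {E' | E' ∈ L ∧ E₀ ⊆ E'}

/-- The map `f̂` sending an SDS to the collection of events of its finite
subcollections. -/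
def fhat (cl : Set T → Set T) (Tneg : Set T) (K : Set (Set T)) :
    Set (Set (Set T)) :=
  {E | ∃ W : Set (Set T), W ⊆ K ∧ W.Finite ∧ E = ev cl Tneg W}

/-- The map `f` sending an SDS to the collection of events of all of its
subcollections. -/
def fprin (cl : Set T → Set T) (Tneg : Set T) (K : Set (Set T)) :
    Set (Set (Set T)) :=
  {E | ∃ W : Set (Set T), W ⊆ K ∧ E = ev cl Tneg W}

/-- The map `d` sending a collection of events to the SDS it determines. -/
def dmap (cl : Set T → Set T) (Tneg : Set T) (F : Set (Set (Set T))) :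
    Set (Set T) :=
  {A : Set T | evA cl Tneg A ∈ F}

/-- `K` is finitely consistent: it is included in some finitely coherent SDS. -/
def FinConsistent (cl : Set T → Set T) (Tneg : Set T) (K : Set (Set T)) : Prop :=
  ∃ K' : Set (Set T), FinCohSDS cl Tneg K' ∧ K ⊆ K'

/-- `K` is consistent: it is included in some coherent SDS. -/
def Consistent (cl : Set T → Set T) (Tneg : Set T) (K : Set (Set T)) : Prop :=
  ∃ K' : Set (Set T), CohSDS cl Tneg K' ∧ K ⊆ K'

/-- The finitary closure operator on SDSes (with value `𝒫(T)` when `K` is not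
finitely consistent, via the empty-intersection convention). -/
def clFin (cl : Set T → Set T) (Tneg : Set T) (K : Set (Set T)) : Set (Set T) :=
  ⋂₀ {K' : Set (Set T) | FinCohSDS cl Tneg K' ∧ K ⊆ K'}

/-- The closure operator on SDSes (with value `𝒫(T)` when `K` is not
consistent, via the empty-intersection convention). -/
def clSDS (cl : Set T → Set T) (Tneg : Set T) (K : Set (Set T)) : Set (Set T) :=
  ⋂₀ {K' : Set (Set T) | CohSDS cl Tneg K' ∧ K ⊆ K'}

variable {cl : Set T → Set T} {Tneg : Set T}

lemma IsClosure.monotone (hcl : IsClosure cl) : Monotone cl :=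
  fun A B => hcl.2.1 A B

lemma ev_anti {W W' : Set (Set T)} (h : W ⊆ W') : ev cl Tneg W' ⊆ ev cl Tneg W :=
  fun _ hD => ⟨hD.1, fun A hA => hD.2 A (h hA)⟩

lemma cohSDS_sds (hmono : Monotone cl) {D : Set T} (hD : CohSDT cl Tneg D) :
    CohSDS cl Tneg (sds D) := by
  obtain ⟨hclosed, hdisj⟩ := hD
  refine ⟨by simp [sds], ?_, ?_, ?_, ?_⟩
  · rintro A₁ ⟨t, ht, htD⟩ A₂ hsub
    exact ⟨t, hsub ht, htD⟩
  · rintro A ⟨t, ht, htD⟩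
    exact ⟨t, ⟨ht, fun htn => hdisj.subset ⟨htD, htn⟩⟩, htD⟩
  · intro t ht
    exact ⟨t, rfl, hclosed ▸ hmono (Set.empty_subset D) ht⟩
  · rintro W hW ⟨A₀, hA₀⟩ f hf
    obtain ⟨t, -⟩ := hW hA₀
    have : Nonempty T := ⟨t⟩
    choose! σ hσA hσD using fun A (hA : A ∈ W) => hW hA
    have hσW : σ '' W ⊆ D := Set.image_subset_iff.2 hσD
    exact ⟨f ⟨σ, hσA⟩, Set.mem_range_self _, hclosed ▸ hmono hσW (hf ⟨σ, hσA⟩)⟩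

lemma cohSDS_biInter {ι : Type*} {s : Set ι} (hs : s.Nonempty) {K : ι → Set (Set T)}
    (hK : ∀ i ∈ s, CohSDS cl Tneg (K i)) : CohSDS cl Tneg (⋂ i ∈ s, K i) := by
  obtain ⟨i₀, hi₀⟩ := hs
  simp only [CohSDS, Set.mem_iInter₂] at hK ⊢
  refine ⟨fun h => (hK i₀ hi₀).1 (h i₀ hi₀), ?_, ?_, ?_, ?_⟩
  · exact fun A₁ hA₁ A₂ hsub i hi => (hK i hi).2.1 A₁ (hA₁ i hi) A₂ hsub
  · exact fun A hA i hi => (hK i hi).2.2.1 A (hA i hi)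
  · exact fun t ht i hi => (hK i hi).2.2.2.1 t ht
  · exact fun W hW hWne f hf i hi =>
      (hK i hi).2.2.2.2 W (fun B hB => Set.mem_iInter₂.1 (hW hB) i hi) hWne f hf

namespace CohSDS

variable {K : Set (Set T)} {A : Set T}

lemma exists_sel_disjoint (hK : CohSDS cl Tneg K) (hne : K.Nonempty) (hA : A ∉ K) :
    ∃ σ : Sel K, Disjoint (cl (σ.1 '' K)) (Tneg ∪ A) := by
  by_contra! h
  choose f hfcl hfbad using fun σ => Set.not_disjoint_iff.1 (h σ)
  have hrange : Set.range f \ Tneg ∈ K :=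
    hK.2.2.1 _ (hK.2.2.2.2 K subset_rfl hne f hfcl)
  refine hA (hK.2.1 _ hrange A ?_)
  rintro _ ⟨⟨σ, rfl⟩, hσ⟩
  exact (hfbad σ).resolve_left hσ

lemma exists_mem_ev_not_mem_sds (hcl : IsClosure cl) (hsan : cl (∅ : Set T) ∩ Tneg = ∅)
    (hK : CohSDS cl Tneg K) (hA : A ∉ K) : ∃ D ∈ ev cl Tneg K, A ∉ sds D := by
  rcases K.eq_empty_or_nonempty with rfl | hne
  · refine ⟨cl ∅, ⟨⟨hcl.2.2 ∅, hsan⟩, fun _ h => h.elim⟩, ?_⟩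
    rintro ⟨t, -, ht⟩
    exact hK.2.2.2.1 t ht
  · obtain ⟨σ, hσ⟩ := hK.exists_sel_disjoint hne hA
    refine ⟨cl (σ.1 '' K), ⟨⟨hcl.2.2 _, ?_⟩, fun B hB => ?_⟩, ?_⟩
    · exact Set.disjoint_iff_inter_eq_empty.1 (hσ.mono_right Set.subset_union_left)
    · exact ⟨σ.1 B, σ.2 B hB, hcl.1 _ (Set.mem_image_of_mem _ hB)⟩
    · rintro ⟨t, htA, htD⟩
      exact Set.disjoint_left.1 hσ htD (Or.inr htA)

lemma iInter_sds_ev_subset (hcl : IsClosure cl) (hsan : cl (∅ : Set T) ∩ Tneg = ∅)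
    {K' : Set (Set T)} (hK' : CohSDS cl Tneg K') (h : K ⊆ K') :
    ⋂ D ∈ ev cl Tneg K, sds D ⊆ K' := by
  intro A hA
  by_contra hAK'
  obtain ⟨D, hD, hAD⟩ := hK'.exists_mem_ev_not_mem_sds hcl hsan hAK'
  exact hAD (Set.mem_iInter₂.1 hA D (ev_anti h hD))

lemma ev_nonempty (hcl : IsClosure cl) (hsan : cl (∅ : Set T) ∩ Tneg = ∅)
    (hK : CohSDS cl Tneg K) : (ev cl Tneg K).Nonempty :=
  let ⟨D, hD, _⟩ := hK.exists_mem_ev_not_mem_sds hcl hsan hK.1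
  ⟨D, hD⟩

end CohSDS

lemma subset_iInter_sds_ev (K : Set (Set T)) : K ⊆ ⋂ D ∈ ev cl Tneg K, sds D :=
  fun _ hA => Set.mem_iInter₂.2 fun _ hD => hD.2 _ hA

section

variable (hcl : IsClosure cl) (hsan : cl (∅ : Set T) ∩ Tneg = ∅) {K : Set (Set T)}
include hcl hsan

lemma consistent_iff_ev_nonempty : Consistent cl Tneg K ↔ (ev cl Tneg K).Nonempty :=
  ⟨fun ⟨_, hK', hsub⟩ => (hK'.ev_nonempty hcl hsan).mono (ev_anti hsub),
    fun ⟨D, hD⟩ => ⟨sds D, cohSDS_sds hcl.monotone hD.1, hD.2⟩⟩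

lemma clSDS_eq_iInter_sds_ev : clSDS cl Tneg K = ⋂ D ∈ ev cl Tneg K, sds D := by
  refine subset_antisymm (fun A hA => Set.mem_iInter₂.2 fun D hD => ?_) ?_
  · exact hA (sds D) ⟨cohSDS_sds hcl.monotone hD.1, hD.2⟩
  · exact Set.subset_sInter fun K' ⟨hK', hsub⟩ => hK'.iInter_sds_ev_subset hcl hsan hsub

lemma cohSDS_iff_consistent_and_eq_iInter_sds_ev :
    CohSDS cl Tneg K ↔ Consistent cl Tneg K ∧ K = ⋂ D ∈ ev cl Tneg K, sds D := by
  refine ⟨fun hK => ⟨⟨K, hK, subset_rfl⟩, ?_⟩, fun ⟨hcons, heq⟩ => ?_⟩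
  · exact subset_antisymm (subset_iInter_sds_ev K) (hK.iInter_sds_ev_subset hcl hsan subset_rfl)
  · exact heq ▸ cohSDS_biInter ((consistent_iff_ev_nonempty hcl hsan).1 hcons)
      fun D hD => cohSDS_sds hcl.monotone hD.1

end

theorem conjunctive_representation_general (T : Type u)
    (cl : Set T → Set T) (Tneg : Set T)
    (hcl : IsClosure cl) (hsan : cl (∅ : Set T) ∩ Tneg = ∅)
    (K : Set (Set T)) :
    (Consistent cl Tneg K ↔
      {D : Set T | CohSDT cl Tneg D ∧ K ⊆ sds D}.Nonempty) ∧
    (clSDS cl Tneg K =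
      ⋂ D ∈ {D : Set T | CohSDT cl Tneg D ∧ K ⊆ sds D}, sds D) ∧
    (CohSDS cl Tneg K ↔
      (Consistent cl Tneg K ∧
        K = ⋂ D ∈ {D : Set T | CohSDT cl Tneg D ∧ K ⊆ sds D}, sds D)) :=
  -- `{D | CohSDT cl Tneg D ∧ K ⊆ sds D}` is `ev cl Tneg K` by definition.
  ⟨consistent_iff_ev_nonempty hcl hsan, clSDS_eq_iInter_sds_ev hcl hsan,
    cohSDS_iff_consistent_and_eq_iInter_sds_ev hcl hsan⟩

/-- Conjunctive representation of consistency, the closure operator, and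
coherence for SDSes. -/
theorem conjunctive_representation (T : Type u) [Nonempty T]
    (cl : Set T → Set T) (Tneg : Set T)
    (hcl : IsClosure cl) (hsan : cl (∅ : Set T) ∩ Tneg = ∅)
    (K : Set (Set T)) :
    (Consistent cl Tneg K ↔
      {D : Set T | CohSDT cl Tneg D ∧ K ⊆ sds D}.Nonempty) ∧
    (clSDS cl Tneg K =
      ⋂ D ∈ {D : Set T | CohSDT cl Tneg D ∧ K ⊆ sds D}, sds D) ∧
    (CohSDS cl Tneg K ↔
      (Consistent cl Tneg K ∧
        K = ⋂ D ∈ {D : Set T | CohSDT cl Tneg D ∧ K ⊆ sds D}, sds D)) :=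
  conjunctive_representation_general T cl Tneg hcl hsan K
end

section
/- Assume cl is finitary. Then a finitary and finitely consistent SDS K ⊆ 𝒫(T) is finitely coherent if and only if K = ⋂{sds(D) : D a coherent SDT with K ⊆ sds(D)}. -/
universe u

variable {T : Type u}

section AuxProof

open Classical in
/-- Restriction of a selection map along an inclusion of collections. -/
def selRestrict {W₁ W₂ : Set (Set T)} (h : W₁ ⊆ W₂) (σ : Sel W₂) : Sel W₁ :=
  ⟨σ.1, fun A hA => σ.2 A (h hA)⟩

lemma sel_nonempty [Nonempty T] {W : Set (Set T)} (h : ∀ A ∈ W, A.Nonempty) :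
    Nonempty (Sel W) := by
  classical
  refine ⟨⟨fun A => if hA : A.Nonempty then hA.choose else Classical.arbitrary T,
    fun A hA => ?_⟩⟩
  show (if hA : A.Nonempty then hA.choose else Classical.arbitrary T) ∈ A
  rw [dif_pos (h A hA)]
  exact (h A hA).choose_spec

lemma chain_finite_subset {c : Set (Set (Set T))} (hc : IsChain (· ⊆ ·) c)
    (hne : c.Nonempty) {W : Set (Set T)} (hW : W.Finite) :
    W ⊆ ⋃₀ c → ∃ K' ∈ c, W ⊆ K' := by
  induction W, hW using Set.Finite.induction_on with
  | empty =>
    intro _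
    obtain ⟨K', hK'⟩ := hne
    exact ⟨K', hK', by simp⟩
  | insert ha hs ih =>
    intro hsub
    obtain ⟨K₁, hK₁, hsK₁⟩ := ih fun x hx => hsub (Set.mem_insert_of_mem _ hx)
    obtain ⟨K₂, hK₂, haK₂⟩ := hsub (Set.mem_insert _ _)
    rcases hc.total hK₁ hK₂ with h | h
    · exact ⟨K₂, hK₂, Set.insert_subset haK₂ (hsK₁.trans h)⟩
    · exact ⟨K₁, hK₁, Set.insert_subset (h haK₂) hsK₁⟩

/-- The one-step extension of an SDS `M` by the singleton `{t}`. -/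
def Lext (cl : Set T → Set T) (Tneg : Set T) (M : Set (Set T)) (t : T) :
    Set (Set T) :=
  {C | ∃ W : Set (Set T), W ⊆ M ∧ W.Finite ∧
    ∀ σ : Sel W, ∃ s, s ∈ cl (insert t (σ.1 '' W)) ∧ (s ∈ Tneg ∨ s ∈ C)}

lemma Lext_upward {cl : Set T → Set T} {Tneg : Set T} {M : Set (Set T)} {t : T}
    {C C' : Set T} (hC : C ∈ Lext cl Tneg M t) (h : C ⊆ C') :
    C' ∈ Lext cl Tneg M t := by
  obtain ⟨W, hWM, hWf, hW⟩ := hC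
  refine ⟨W, hWM, hWf, fun σ => ?_⟩
  obtain ⟨s, hs1, hs2⟩ := hW σ
  exact ⟨s, hs1, hs2.imp id (fun hx => h hx)⟩

lemma subset_Lext {cl : Set T → Set T} {Tneg : Set T} {M : Set (Set T)} {t : T}
    (hcl : IsClosure cl) : M ⊆ Lext cl Tneg M t := by
  intro B hB
  refine ⟨{B}, by simpa using hB, Set.finite_singleton B, fun σ => ?_⟩
  refine ⟨σ.1 B, ?_, Or.inr (σ.2 B rfl)⟩
  exact hcl.1 _ (Set.mem_insert_of_mem _ ⟨B, rfl, rfl⟩)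

lemma singleton_mem_Lext {cl : Set T → Set T} {Tneg : Set T} {M : Set (Set T)}
    {t : T} (hcl : IsClosure cl) : ({t} : Set T) ∈ Lext cl Tneg M t := by
  refine ⟨∅, by simp, Set.finite_empty, fun σ => ?_⟩
  exact ⟨t, hcl.1 _ (Set.mem_insert _ _), Or.inr rfl⟩

lemma Lext_fincoh {cl : Set T → Set T} {Tneg : Set T} {M : Set (Set T)} {t : T}
    [Nonempty T] (hcl : IsClosure cl) (hM : FinCohSDS cl Tneg M)
    (h0 : (∅ : Set T) ∉ Lext cl Tneg M t) : FinCohSDS cl Tneg (Lext cl Tneg M t) := by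
  classical
  refine ⟨h0, fun C₁ hC₁ C₂ h12 => Lext_upward hC₁ h12, ?_, ?_, ?_⟩
  · -- K3
    intro C hC
    obtain ⟨W, hWM, hWf, hW⟩ := hC
    refine ⟨W, hWM, hWf, fun σ => ?_⟩
    obtain ⟨s, hs1, hs2⟩ := hW σ
    refine ⟨s, hs1, ?_⟩
    by_cases hsT : s ∈ Tneg
    · exact Or.inl hsT
    · rcases hs2 with h | h
      · exact absurd h hsT
      · exact Or.inr ⟨h, hsT⟩
  · -- K4
    intro s hs
    refine ⟨∅, by simp, Set.finite_empty, fun σ => ?_⟩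
    refine ⟨s, ?_, Or.inr rfl⟩
    exact hcl.2.1 _ _ (Set.empty_subset _) hs
  · -- K5fin
    intro W' hW'L hW'f hW'ne g hg
    have hW'L2 : ∀ C, C ∈ W' → C ∈ Lext cl Tneg M t := fun C hC => hW'L hC
    choose Wc hWcM hWcf hWc using hW'L2
    let Wc' : Set T → Set (Set T) := fun C => if h : C ∈ W' then Wc C h else ∅
    have hWc'M : ∀ C, Wc' C ⊆ M := by
      intro C
      by_cases h : C ∈ W' <;> simp [Wc', h]
      · exact hWcM C h
    have hWc'eq : ∀ C (h : C ∈ W'), Wc' C = Wc C h := fun C h => dif_pos h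
    refine ⟨⋃ C ∈ W', Wc' C, ?_, hW'f.biUnion (fun C _ => ?_), ?_⟩
    · exact Set.iUnion₂_subset fun C _ => hWc'M C
    · by_cases h : C ∈ W' <;> simp [Wc', h]
      · exact hWcf C h
    · intro σ
      have hsubW : ∀ C (h : C ∈ W'), Wc C h ⊆ ⋃ C ∈ W', Wc' C := by
        intro C h A hA
        exact Set.mem_biUnion h (by rw [hWc'eq C h]; exact hA)
      have hexs : ∀ C (h : C ∈ W'), ∃ s, s ∈ cl (insert t (σ.1 '' Wc C h)) ∧
          (s ∈ Tneg ∨ s ∈ C) := fun C h => hWc C h (selRestrict (hsubW C h) σ)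
      choose s hs1 hs2 using hexs
      have hmono : ∀ C (h : C ∈ W'), cl (insert t (σ.1 '' Wc C h)) ⊆
          cl (insert t (σ.1 '' ⋃ C ∈ W', Wc' C)) := by
        intro C h
        exact hcl.2.1 _ _ (Set.insert_subset_insert (Set.image_mono (hsubW C h)))
      by_cases hT : ∃ C, ∃ h : C ∈ W', s C h ∈ Tneg
      · obtain ⟨C, h, hTneg⟩ := hT
        exact ⟨s C h, hmono C h (hs1 C h), Or.inl hTneg⟩
      · push_neg at hT
        have hsC : ∀ C (h : C ∈ W'), s C h ∈ C := fun C h =>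
          (hs2 C h).resolve_left (hT C h)
        have hτp : ∀ C ∈ W',
            (if h : C ∈ W' then s C h else Classical.arbitrary T) ∈ C := by
          intro C hC
          rw [dif_pos hC]; exact hsC C hC
        refine ⟨g ⟨fun C => if h : C ∈ W' then s C h else Classical.arbitrary T, hτp⟩,
          ?_, Or.inr ⟨_, rfl⟩⟩
        have himg : (fun C => if h : C ∈ W' then s C h else Classical.arbitrary T) '' W'
            ⊆ cl (insert t (σ.1 '' ⋃ C ∈ W', Wc' C)) := by
          rintro x ⟨C, hC, rfl⟩
          show (if h : C ∈ W' then s C h else Classical.arbitrary T) ∈ _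
          rw [dif_pos hC]
          exact hmono C hC (hs1 C hC)
        have h6 := hcl.2.1 _ _ himg
          (hg ⟨fun C => if h : C ∈ W' then s C h else Classical.arbitrary T, hτp⟩)
        rwa [hcl.2.2] at h6

lemma exists_singleton_mem [Nonempty T] {cl : Set T → Set T} {Tneg : Set T}
    {M : Set (Set T)} {A : Set T} (hcl : IsClosure cl) (hM : FinCohSDS cl Tneg M)
    (hA : A ∉ M)
    (hmax : ∀ K'' : Set (Set T), FinCohSDS cl Tneg K'' → A ∉ K'' → M ⊆ K'' → K'' = M)
    {B : Set T} (hB : B ∈ M) (hBfin : B.Finite) : ∃ t ∈ B, ({t} : Set T) ∈ M := by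
  classical
  by_contra hcon
  push_neg at hcon
  set B' : Set T := B \ Tneg with hB'def
  have hB'M : B' ∈ M := hM.2.2.1 B hB
  have hB'fin : B'.Finite := hBfin.diff
  -- every t ∈ B' forces A into the extension
  have hL : ∀ t ∈ B', A ∈ Lext cl Tneg M t := by
    intro t ht
    by_cases h0 : (∅ : Set T) ∈ Lext cl Tneg M t
    · exact Lext_upward h0 (Set.empty_subset _)
    · by_contra hAL
      have heq := hmax _ (Lext_fincoh hcl hM h0) hAL (subset_Lext hcl)
      have : ({t} : Set T) ∈ M := heq ▸ singleton_mem_Lext (M := M) (Tneg := Tneg) hcl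
      exact hcon t ht.1 this
  choose Wt hWtM hWtf hWt using hL
  let Wt' : T → Set (Set T) := fun t => if h : t ∈ B' then Wt t h else ∅
  have hWt'eq : ∀ t (h : t ∈ B'), Wt' t = Wt t h := fun t h => dif_pos h
  set W : Set (Set T) := insert B' (⋃ t ∈ B', Wt' t) with hWdef
  have hWM : W ⊆ M := by
    refine Set.insert_subset hB'M (Set.iUnion₂_subset fun t ht => ?_)
    rw [hWt'eq t ht]; exact hWtM t ht
  have hWf : W.Finite := by
    refine (Set.Finite.biUnion hB'fin fun t ht => ?_).insert B'
    rw [hWt'eq t ht]; exact hWtf t ht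
  have hWne : W.Nonempty := ⟨B', Set.mem_insert _ _⟩
  have hclaim : ∀ σ : Sel W, ∃ s, s ∈ cl (σ.1 '' W) ∧ (s ∈ Tneg ∨ s ∈ A) := by
    intro σ
    have htB' : σ.1 B' ∈ B' := σ.2 B' (Set.mem_insert _ _)
    have hsubW : Wt (σ.1 B') htB' ⊆ W := by
      intro C hC
      refine Set.mem_insert_of_mem _ (Set.mem_biUnion htB' ?_)
      rw [hWt'eq _ htB']; exact hC
    obtain ⟨s, hs1, hs2⟩ := hWt _ htB' (selRestrict hsubW σ)
    refine ⟨s, ?_, hs2⟩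
    refine hcl.2.1 _ _ ?_ hs1
    rintro x (rfl | ⟨C, hC, rfl⟩)
    · exact ⟨B', Set.mem_insert _ _, rfl⟩
    · exact ⟨C, hsubW hC, rfl⟩
  choose f hf1 hf2 using hclaim
  have hrange : Set.range f ∈ M := hM.2.2.2.2 W hWM hWf hWne f hf1
  have hdiff : Set.range f \ Tneg ∈ M := hM.2.2.1 _ hrange
  have hsubA : Set.range f \ Tneg ⊆ A := by
    rintro x ⟨⟨σ, rfl⟩, hxT⟩
    rcases hf2 σ with h | h
    · exact absurd h hxT
    · exact h
  exact hA (hM.2.1 _ hdiff A hsubA)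

end AuxProof


/-- Conjunctive representation for finitary SDSes: a finitary and finitely
consistent SDS is finitely coherent iff it is an intersection of conjunctive
models. -/
theorem conjunctive_representation_finitarySDS (T : Type u) [Nonempty T]
    (cl : Set T → Set T) (Tneg : Set T)
    (hcl : IsClosure cl) (hsan : cl (∅ : Set T) ∩ Tneg = ∅)
    (hfin : IsFinitary cl)
    (K : Set (Set T)) (hfty : FinitarySDS K)
    (hcons : FinConsistent cl Tneg K) :
    FinCohSDS cl Tneg K ↔
      K = ⋂ D ∈ {D : Set T | CohSDT cl Tneg D ∧ K ⊆ sds D}, sds D := by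
  classical
  constructor
  · -- forward direction
    intro hK
    apply Set.Subset.antisymm
    · intro A hA
      exact Set.mem_iInter₂.2 fun D hD => hD.2 hA
    · intro A hAin
      by_contra hAK
      -- Zorn's lemma
      set P : Set (Set (Set T)) :=
        {K' | FinCohSDS cl Tneg K' ∧ K ⊆ K' ∧ A ∉ K'} with hPdef
      have hzc : ∀ c ⊆ P, IsChain (· ⊆ ·) c → c.Nonempty →
          ∃ ub ∈ P, ∀ s ∈ c, s ⊆ ub := by
        intro c hcP hchain hcne
        refine ⟨⋃₀ c, ⟨⟨?_, ?_, ?_, ?_, ?_⟩, ?_, ?_⟩,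
          fun s hs => Set.subset_sUnion_of_mem hs⟩
        · rintro ⟨K', hK'c, h0⟩
          exact (hcP hK'c).1.1 h0
        · rintro A₁ ⟨K', hK'c, hA₁⟩ A₂ h12
          exact ⟨K', hK'c, (hcP hK'c).1.2.1 A₁ hA₁ A₂ h12⟩
        · rintro B ⟨K', hK'c, hB⟩
          exact ⟨K', hK'c, (hcP hK'c).1.2.2.1 B hB⟩
        · intro t ht
          obtain ⟨K', hK'c⟩ := hcne
          exact ⟨K', hK'c, (hcP hK'c).1.2.2.2.1 t ht⟩
        · intro W hWc hWf hWne f hf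
          obtain ⟨K', hK'c, hWK'⟩ := chain_finite_subset hchain hcne hWf hWc
          exact ⟨K', hK'c, (hcP hK'c).1.2.2.2.2 W hWK' hWf hWne f hf⟩
        · obtain ⟨K', hK'c⟩ := hcne
          exact (hcP hK'c).2.1.trans (Set.subset_sUnion_of_mem hK'c)
        · rintro ⟨K', hK'c, hAK'⟩
          exact (hcP hK'c).2.2 hAK'
      obtain ⟨M, hKM, hMmax⟩ :=
        zorn_subset_nonempty P hzc K ⟨hK, subset_rfl, hAK⟩
      obtain ⟨hMcoh, hKM2, hAM⟩ := hMmax.1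
      have hmax' : ∀ K'' : Set (Set T), FinCohSDS cl Tneg K'' → A ∉ K'' →
          M ⊆ K'' → K'' = M := by
        intro K'' h1 h2 h3
        exact subset_antisymm (hMmax.2 ⟨h1, hKM2.trans h3, h2⟩ h3) h3
      set D : Set T := {t | ({t} : Set T) ∈ M} with hDdef
      have hDTneg : D ∩ Tneg = ∅ := by
        ext t
        simp only [Set.mem_inter_iff, Set.mem_empty_iff_false, iff_false, not_and]
        intro htD htT
        have h3 := hMcoh.2.2.1 _ htD
        rw [Set.diff_eq_empty.2 (Set.singleton_subset_iff.2 htT)] at h3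
        exact hMcoh.1 h3
      have hclD : cl D = D := by
        apply Set.Subset.antisymm _ (hcl.1 D)
        intro t ht
        rw [hfin D] at ht
        obtain ⟨F, hFs, htF⟩ := Set.mem_iUnion₂.1 ht
        rcases F.eq_empty_or_nonempty with rfl | hFne
        · exact hMcoh.2.2.2.1 t htF
        · set W : Set (Set T) := (fun s => ({s} : Set T)) '' F with hWdef
          have hWM : W ⊆ M := by rintro _ ⟨s, hs, rfl⟩; exact hFs.2 hs
          have hWne : W.Nonempty := hFne.image _
          have hWf : W.Finite := hFs.1.image _
          have himg : ∀ σ : Sel W, σ.1 '' W = F := by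
            intro σ
            apply Set.Subset.antisymm
            · rintro _ ⟨_, ⟨s, hs, rfl⟩, rfl⟩
              have h1 : σ.1 {s} = s :=
                Set.mem_singleton_iff.1 (σ.2 _ ⟨s, hs, rfl⟩)
              rw [h1]; exact hs
            · intro s hs
              exact ⟨{s}, ⟨s, hs, rfl⟩,
                Set.mem_singleton_iff.1 (σ.2 _ ⟨s, hs, rfl⟩)⟩
          haveI : Nonempty (Sel W) :=
            sel_nonempty (by rintro _ ⟨s, hs, rfl⟩; exact ⟨s, rfl⟩)
          have h5 := hMcoh.2.2.2.2 W hWM hWf hWne (fun _ => t)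
            (fun σ => by rw [himg σ]; exact htF)
          rwa [Set.range_const] at h5
      have hDS : D ∈ {D : Set T | CohSDT cl Tneg D ∧ K ⊆ sds D} := by
        refine ⟨⟨hclD, hDTneg⟩, ?_⟩
        intro B hB
        obtain ⟨B₀, hB₀f, hB₀B, hB₀K⟩ := hfty B hB
        obtain ⟨t, htB₀, htM⟩ :=
          exists_singleton_mem hcl hMcoh hAM hmax' (hKM2 hB₀K) hB₀f
        exact ⟨t, hB₀B htB₀, htM⟩
      obtain ⟨t, htA, htD⟩ := Set.mem_iInter₂.1 hAin D hDS
      exact hAM (hMcoh.2.1 _ htD A (Set.singleton_subset_iff.2 htA))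
  · -- backward direction
    intro hKeq
    obtain ⟨K', hK'coh, hKK'⟩ := hcons
    have hmem : ∀ A : Set T, A ∈ K ↔
        ∀ D : Set T, (CohSDT cl Tneg D ∧ K ⊆ sds D) → (A ∩ D).Nonempty := by
      intro A
      constructor
      · intro hA D hD
        have hA' := hA
        rw [hKeq] at hA'
        exact Set.mem_iInter₂.1 hA' D hD
      · intro h
        rw [hKeq]
        exact Set.mem_iInter₂.2 fun D hD => h D hD
    refine ⟨fun h => hK'coh.1 (hKK' h), ?_, ?_, ?_, ?_⟩
    · intro A₁ hA₁ A₂ h12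
      rw [hmem] at hA₁ ⊢
      intro D hD
      obtain ⟨x, hx1, hx2⟩ := hA₁ D hD
      exact ⟨x, h12 hx1, hx2⟩
    · intro B hB
      rw [hmem] at hB ⊢
      intro D hD
      obtain ⟨x, hx1, hx2⟩ := hB D hD
      refine ⟨x, ⟨hx1, fun hxT => ?_⟩, hx2⟩
      exact Set.eq_empty_iff_forall_notMem.1 hD.1.2 x ⟨hx2, hxT⟩
    · intro t ht
      rw [hmem]
      intro D hD
      have h1 := hcl.2.1 ∅ D (Set.empty_subset D)
      rw [hD.1.1] at h1
      exact ⟨t, rfl, h1 ht⟩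
    · intro W hWK hWf hWne f hf
      rw [hmem]
      intro D hD
      have hsel : ∀ A ∈ W, (A ∩ D).Nonempty :=
        fun A hA => (hmem A).1 (hWK hA) D hD
      let σf : Set T → T := fun A =>
        if h : (A ∩ D).Nonempty then h.choose else Classical.arbitrary T
      have hσf : ∀ A ∈ W, σf A ∈ A ∩ D := by
        intro A hA
        show (if h : (A ∩ D).Nonempty then h.choose else Classical.arbitrary T) ∈ A ∩ D
        rw [dif_pos (hsel A hA)]
        exact (hsel A hA).choose_spec
      refine ⟨f ⟨σf, fun A hA => (hσf A hA).1⟩, ⟨_, rfl⟩, ?_⟩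
      have himg : σf '' W ⊆ D := by
        rintro _ ⟨A, hA, rfl⟩
        exact (hσf A hA).2
      have h2 := hcl.2.1 _ _ himg (hf ⟨σf, fun A hA => (hσf A hA).1⟩)
      rwa [hD.1.1] at h2
end
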